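/- Let p be a prime with p ≡ 3 (mod 4), let m be a positive integer, and set n = p^m. Then every non-degenerate ℤ-bilinear form b : ℤ/nℤ × ℤ/nℤ → ℤ/nℤ is equivalent to a standard form up to sign: there exists an additive automorphism ψ of ℤ/nℤ such that either b(ψ(x),ψ(y)) = x·y for all x, y, or b(ψ(x),ψ(y)) = −x·y for all x, y. -/

import Mathlib

/-!
A `ℤ`-bilinear form on `ℤ/nℤ` is determined by `c = b 1 1`, namely `b x y = x * y * c`, and
non-degeneracy makes `c` a unit. Rescaling by a unit `u` multiplies `c` by `u²`, so the question is
whether `c` or `-c` is a square. The unit group of `ℤ/p^mℤ` is cyclic for odd `p`, and in a cyclic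
group the product of two non-squares is a square; since `-1` is not a square (it is not even one
modulo `p ≡ 3 mod 4`), a non-square `c` has `-c = (-1) * c` a square.
-/

theorem IsCyclic.isSquare_mul_of_not_isSquare {G : Type*} [Group G] [IsCyclic G] {a b : G}
    (ha : ¬IsSquare a) (hb : ¬IsSquare b) : IsSquare (a * b) := by
  obtain ⟨g, hg⟩ := IsCyclic.exists_generator (α := G)
  obtain ⟨i, rfl⟩ := Subgroup.mem_zpowers_iff.mp (hg a)
  obtain ⟨j, rfl⟩ := Subgroup.mem_zpowers_iff.mp (hg b)
  have hi : Odd i := Int.not_even_iff_odd.mp fun h => ha (h.isSquare_zpow g)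
  have hj : Odd j := Int.not_even_iff_odd.mp fun h => hb (h.isSquare_zpow g)
  rw [← zpow_add]
  exact (hi.add_odd hj).isSquare_zpow g

namespace ZMod

section Bilinear

variable {n : ℕ}

theorem linearMap_apply_eq_mul (f : ZMod n →ₗ[ℤ] ZMod n) (x : ZMod n) : f x = x * f 1 := by
  obtain ⟨k, rfl⟩ := intCast_surjective x
  simpa using map_zsmul f k 1

theorem bilin_apply_eq_mul (b : ZMod n →ₗ[ℤ] ZMod n →ₗ[ℤ] ZMod n) (x y : ZMod n) :
    b x y = x * y * b 1 1 := by
  rw [linearMap_apply_eq_mul (b x),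
    show b x 1 = x * b 1 1 from linearMap_apply_eq_mul (b.flip 1) x]
  ring

theorem isUnit_bilin_one_one [NeZero n] {b : ZMod n →ₗ[ℤ] ZMod n →ₗ[ℤ] ZMod n}
    (hb : ∀ x : ZMod n, (∀ y : ZMod n, b x y = 0) → x = 0) : IsUnit (b 1 1) := by
  refine isUnit_iff_mem_nonZeroDivisors_of_finite.mpr
    (mem_nonZeroDivisors_iff_right.mpr fun x hx => hb x fun y => ?_)
  rw [bilin_apply_eq_mul, mul_right_comm, hx, zero_mul]

theorem bilin_apply_inv_mul_inv_mul (b : ZMod n →ₗ[ℤ] ZMod n →ₗ[ℤ] ZMod n) (u : (ZMod n)ˣ)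
    {ε : ZMod n} (hε : b 1 1 = ε * (u * u)) (x y : ZMod n) :
    b (↑u⁻¹ * x) (↑u⁻¹ * y) = ε * (x * y) := by
  rw [bilin_apply_eq_mul, hε]
  linear_combination ε * x * y * ((u⁻¹ : (ZMod n)ˣ) * u + 1) * u.inv_mul

end Bilinear

variable {p m : ℕ}

theorem not_isSquare_neg_one_of_prime_pow (hp : p.Prime) (hp4 : p % 4 = 3) (hm : 0 < m) :
    ¬IsSquare (-1 : ZMod (p ^ m)) := by
  have : Fact p.Prime := ⟨hp⟩
  intro h
  have h' := h.map (castHom (dvd_pow_self p hm.ne') (ZMod p))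
  rw [map_neg, map_one] at h'
  exact exists_sq_eq_neg_one_iff.mp h' hp4

theorem isSquare_or_isSquare_neg_of_unit (hp : p.Prime) (hp4 : p % 4 = 3) (hm : 0 < m)
    (c : (ZMod (p ^ m))ˣ) : IsSquare c ∨ IsSquare (-c) := by
  have := isCyclic_units_of_prime_pow p hp (by omega) m
  have hneg : ¬IsSquare (-1 : (ZMod (p ^ m))ˣ) := fun h => by
    simpa using not_isSquare_neg_one_of_prime_pow hp hp4 hm (h.map (Units.coeHom _))
  by_cases hc : IsSquare c
  · exact Or.inl hc
  · exact Or.inr (neg_one_mul c ▸ IsCyclic.isSquare_mul_of_not_isSquare hneg hc)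

end ZMod

/-- For a prime `p ≡ 3 (mod 4)` and `n = p^m` with `m ≥ 1`, every non-degenerate
`ℤ`-bilinear form on `ℤ/nℤ` is equivalent, up to sign, to the standard form. -/
theorem bilinear_form_equiv_standard_up_to_sign (p : ℕ) (hp : p.Prime) (hp4 : p % 4 = 3)
    (m : ℕ) (hm : 0 < m)
    (b : ZMod (p ^ m) →ₗ[ℤ] ZMod (p ^ m) →ₗ[ℤ] ZMod (p ^ m))
    (hb : ∀ x : ZMod (p ^ m), (∀ y : ZMod (p ^ m), b x y = 0) → x = 0) :
    ∃ ψ : ZMod (p ^ m) ≃+ ZMod (p ^ m),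
      (∀ x y : ZMod (p ^ m), b (ψ x) (ψ y) = x * y) ∨
        (∀ x y : ZMod (p ^ m), b (ψ x) (ψ y) = -(x * y)) := by
  have : NeZero (p ^ m) := ⟨pow_ne_zero _ hp.ne_zero⟩
  obtain ⟨c, hc⟩ := ZMod.isUnit_bilin_one_one hb
  rcases ZMod.isSquare_or_isSquare_neg_of_unit hp hp4 hm c with ⟨u, hu⟩ | ⟨u, hu⟩
  · have hε : b 1 1 = 1 * (u * u) := by rw [← hc, hu, Units.val_mul, one_mul]
    exact ⟨AddAut.mulLeft u⁻¹, Or.inl fun x y =>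
      (ZMod.bilin_apply_inv_mul_inv_mul b u hε x y).trans (one_mul _)⟩
  · have hε : b 1 1 = -1 * (u * u) := by
      rw [← hc, neg_one_mul, ← Units.val_mul, ← hu, Units.val_neg, neg_neg]
    exact ⟨AddAut.mulLeft u⁻¹, Or.inr fun x y =>
      (ZMod.bilin_apply_inv_mul_inv_mul b u hε x y).trans (neg_one_mul _)⟩
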